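/- arXiv:0806.2704 — 3 statements merged into one kernel-verified Lean document; each statement's English description precedes it below -/
import Mathlib

section
/- Let E and F be complex Banach spaces and let T : E* → F* be a linear map that is continuous with respect to the weak* topologies σ(E*, E) and σ(F*, F), and suppose that ‖T(x)‖ = inf{‖x − k‖ : k ∈ E*, T(k) = 0} for every x ∈ E* (that is, the induced injective map from the quotient E*/ker T into F* is isometric). Then the range of T is closed in the weak* topology σ(F*, F). -/
/-!
Weak*-continuity makes each `φ ↦ T φ f` an evaluation at a point of `E`, so `T` is the adjoint
of a map `u : F → E`, bounded by the closed graph theorem. Every `k ∈ ker T` annihilates the range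
of `u`, so the isometry hypothesis gives `‖φ (u f)‖ ≤ ‖φ ∘ u‖ * ‖u f‖` for all `φ`. By Hahn–Banach
separation, the image of the unit ball of `F` is then dense in the unit ball of `range u`, and the
iteration from the proof of the open mapping theorem produces for every `u f` a preimage of norm at
most `2 ‖u f‖`. Consequently each functional vanishing on `ker u` factors through `u`, i.e. the
range of `T` is the annihilator of `ker u`, which is weak*-closed.
-/

open Metric

section NormedField

variable {𝕜 E F : Type*} [NormedField 𝕜] [NormedAddCommGroup E] [NormedSpace 𝕜 E]
  [NormedAddCommGroup F] [NormedSpace 𝕜 F]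

theorem ContinuousLinearMap.exists_preimage_norm_le_of_approx [CompleteSpace E] (u : E →L[𝕜] F)
    {C : ℝ} (hC0 : 0 ≤ C) (hC : ∀ y, ∃ x, dist (u x) y ≤ 1 / 2 * ‖y‖ ∧ ‖x‖ ≤ C * ‖y‖) (y : F) :
    ∃ x, u x = y ∧ ‖x‖ ≤ 2 * C * ‖y‖ := by
  choose g hg using hC
  let residual (z : F) := z - u (g z)
  have hres (n : ℕ) : ‖residual^[n] y‖ ≤ (1 / 2) ^ n * ‖y‖ := by
    induction n with
    | zero => simp
    | succ n ih =>
      rw [Function.iterate_succ_apply', pow_succ', mul_assoc, ← dist_eq_norm']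
      exact (hg _).1.trans (by gcongr)
  let xs (n : ℕ) := g (residual^[n] y)
  have hxs (n : ℕ) : ‖xs n‖ ≤ (1 / 2) ^ n * (C * ‖y‖) :=
    calc ‖xs n‖ ≤ C * ‖residual^[n] y‖ := (hg _).2
      _ ≤ C * ((1 / 2) ^ n * ‖y‖) := by gcongr; exact hres n
      _ = (1 / 2) ^ n * (C * ‖y‖) := by ring
  have hgeom : Summable fun n : ℕ ↦ (1 / 2 : ℝ) ^ n * (C * ‖y‖) :=
    summable_geometric_two.mul_right _
  have hsum : Summable fun n ↦ ‖xs n‖ :=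
    .of_nonneg_of_le (fun _ ↦ norm_nonneg _) hxs hgeom
  have hpartial (n : ℕ) : u (∑ i ∈ Finset.range n, xs i) = y - residual^[n] y := by
    induction n with
    | zero => simp
    | succ n ih => rw [Finset.sum_range_succ, map_add, ih, Function.iterate_succ_apply', sub_add]
  refine ⟨∑' n, xs n, tendsto_nhds_unique ((u.continuous.tendsto _).comp
    hsum.of_norm.hasSum.tendsto_sum_nat) ?_, ?_⟩
  · simp only [Function.comp_def, hpartial]
    have h := (tendsto_pow_atTop_nhds_zero_of_lt_one one_half_pos.le one_half_lt_one).mul_const ‖y‖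
    rw [zero_mul] at h
    simpa using tendsto_const_nhds.sub (squeeze_zero_norm hres h)
  · calc ‖∑' n, xs n‖ ≤ ∑' n, ‖xs n‖ := norm_tsum_le_tsum_norm hsum
      _ ≤ ∑' n : ℕ, (1 / 2 : ℝ) ^ n * (C * ‖y‖) := hsum.tsum_le_tsum hxs hgeom
      _ = 2 * C * ‖y‖ := by rw [tsum_mul_right, tsum_geometric_two, mul_assoc]

end NormedField

section RCLike

variable {𝕜 E F : Type*} [RCLike 𝕜] [NormedAddCommGroup E] [NormedSpace 𝕜 E]
  [NormedAddCommGroup F] [NormedSpace 𝕜 F]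

theorem WeakDual.exists_preadjoint [CompleteSpace E] [CompleteSpace F]
    (T : WeakDual 𝕜 E →L[𝕜] WeakDual 𝕜 F) :
    ∃ u : F →L[𝕜] E, ∀ φ f, T φ f = φ (u f) := by
  let P := LinearMap.rightDualEquiv (topDualPairing 𝕜 E)
    fun _ he ↦ SeparatingDual.eq_zero_of_forall_dual_eq_zero he
  let u : F →ₗ[𝕜] E := P.symm.toLinearMap ∘ₗ (ContinuousLinearMap.precomp 𝕜 T).toLinearMap ∘ₗ
    WeakBilin.eval (topDualPairing 𝕜 F)
  have hu : ∀ φ f, T φ f = φ (u f) := fun φ f ↦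
    (DFunLike.congr_fun (P.apply_symm_apply ((WeakBilin.eval _ f).comp T)) φ).symm
  refine ⟨⟨u, u.continuous_of_seq_closed_graph fun fs f e hf he ↦ ?_⟩, hu⟩
  refine (SeparatingDual.eq_iff_forall_dual_eq (R := 𝕜)).2 fun φ ↦ tendsto_nhds_unique
    ((φ.continuous.tendsto e).comp he) ?_
  have h := ((WeakDual.toStrongDual (T φ)).continuous.tendsto f).comp hf
  rwa [show ⇑(WeakDual.toStrongDual (T φ)) = φ ∘ u from funext (hu φ)] at h

theorem mem_closure_image_closedBall_of_forall_norm_apply_le (u : F →L[𝕜] E) {e : E}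
    (he : ∀ φ : StrongDual 𝕜 E, ‖φ e‖ ≤ ‖φ ∘L u‖) : e ∈ closure (u '' closedBall 0 1) := by
  let _ := NormedSpace.restrictScalars ℝ 𝕜 E
  let _ := NormedSpace.restrictScalars ℝ 𝕜 F
  by_contra he'
  have hconv : Convex ℝ (u '' closedBall 0 1) :=
    (convex_closedBall 0 1).linear_image (u.toLinearMap.restrictScalars ℝ)
  obtain ⟨φ, t, hφ, ht⟩ :=
    RCLike.geometric_hahn_banach_closed_point (𝕜 := 𝕜) hconv.closure isClosed_closure he'
  -- rotating `f` by a unimodular scalar turns `re (φ (u f))` into `‖φ (u f)‖`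
  have hball (f : F) (hf : ‖f‖ ≤ 1) : ‖φ (u f)‖ < t := by
    obtain ⟨c, hc, hcf⟩ := RCLike.exists_norm_eq_mul_self (φ (u f))
    have hmem : c • f ∈ closedBall (0 : F) 1 := by
      rwa [mem_closedBall_zero_iff, norm_smul, hc, one_mul]
    have h := hφ _ (subset_closure ⟨_, hmem, rfl⟩)
    rwa [map_smul, map_smul, smul_eq_mul, ← hcf, RCLike.ofReal_re] at h
  have hnorm : ‖φ ∘L u‖ ≤ t :=
    ContinuousLinearMap.opNorm_le_of_unit_norm (by simpa using (hball 0 (by simp)).le)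
      fun f hf ↦ (hball f hf.le).le
  exact ((he φ).trans hnorm).not_gt (ht.trans_le (RCLike.re_le_norm _))

theorem exists_approx_preimage_of_forall_norm_apply_le (u : F →L[𝕜] E)
    (hu : ∀ (φ : StrongDual 𝕜 E) (f : F), ‖φ (u f)‖ ≤ ‖φ ∘L u‖ * ‖u f‖) (f : F) :
    ∃ g, dist (u g) (u f) ≤ 1 / 2 * ‖u f‖ ∧ ‖g‖ ≤ ‖u f‖ := by
  rcases eq_or_ne (u f) 0 with h0 | h0
  · exact ⟨0, by simp [h0]⟩
  set c : 𝕜 := (‖u f‖ : 𝕜)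
  have hc : ‖c‖ = ‖u f‖ := by simp [c]
  have hc0 : c ≠ 0 := by simpa [c] using h0
  have hmem := mem_closure_image_closedBall_of_forall_norm_apply_le u (e := c⁻¹ • u f)
    fun φ ↦ by
      rw [map_smul, norm_smul, norm_inv, hc, inv_mul_le_iff₀ (norm_pos_iff.2 h0), mul_comm]
      exact hu φ f
  obtain ⟨_, ⟨g, hg, rfl⟩, hdist⟩ := Metric.mem_closure_iff.1 hmem (1 / 2) one_half_pos
  rw [mem_closedBall_zero_iff] at hg
  refine ⟨c • g, ?_, ?_⟩
  · rw [map_smul, ← smul_inv_smul₀ hc0 (u f), dist_smul₀, dist_comm, smul_inv_smul₀ hc0, hc,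
      mul_comm]
    gcongr
  · rw [norm_smul, hc]
    exact mul_le_of_le_one_right (norm_nonneg _) hg

theorem exists_preimage_norm_le_of_forall_norm_apply_le [CompleteSpace F] (u : F →L[𝕜] E)
    (hu : ∀ (φ : StrongDual 𝕜 E) (f : F), ‖φ (u f)‖ ≤ ‖φ ∘L u‖ * ‖u f‖) (f : F) :
    ∃ g, u g = u f ∧ ‖g‖ ≤ 2 * ‖u f‖ := by
  obtain ⟨g, hg, hnorm⟩ := u.rangeRestrict.exists_preimage_norm_le_of_approx zero_le_one
    (fun ⟨_, f, rfl⟩ ↦ (exists_approx_preimage_of_forall_norm_apply_le u hu f).imp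
      fun _ hg ↦ ⟨hg.1, hg.2.trans_eq (one_mul _).symm⟩) ⟨u f, f, rfl⟩
  exact ⟨g, congrArg Subtype.val hg, by simpa using hnorm⟩

theorem exists_comp_eq_of_forall_exists_preimage_norm_le (u : F →L[𝕜] E) {C : ℝ}
    (hC : ∀ f, ∃ g, u g = u f ∧ ‖g‖ ≤ C * ‖u f‖) {ψ : StrongDual 𝕜 F}
    (hψ : ∀ f, u f = 0 → ψ f = 0) : ∃ φ : StrongDual 𝕜 E, φ ∘L u = ψ := by
  let φ₀ : (u : F →ₗ[𝕜] E).range →ₗ[𝕜] 𝕜 :=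
    (LinearMap.ker (u : F →ₗ[𝕜] E)).liftQ ψ (fun f hf ↦ hψ f hf) ∘ₗ
      (u : F →ₗ[𝕜] E).quotKerEquivRange.symm.toLinearMap
  have hφ₀ (f : F) : φ₀ ⟨u f, f, rfl⟩ = ψ f := by
    have h : (u : F →ₗ[𝕜] E).quotKerEquivRange.symm ⟨u f, f, rfl⟩ = Submodule.Quotient.mk f :=
      (LinearEquiv.symm_apply_eq _).2 rfl
    simp only [φ₀, LinearMap.comp_apply, LinearEquiv.coe_coe, h]
    rfl
  have hbound (y : (u : F →ₗ[𝕜] E).range) : ‖φ₀ y‖ ≤ C * ‖ψ‖ * ‖y‖ := by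
    obtain ⟨_, f, rfl⟩ := y
    obtain ⟨g, hg, hgC⟩ := hC f
    calc ‖φ₀ ⟨u f, f, rfl⟩‖ = ‖ψ g‖ := by
          rw [← hφ₀ g]; exact congrArg _ (congrArg φ₀ (Subtype.ext hg.symm))
      _ ≤ ‖ψ‖ * ‖g‖ := ψ.le_opNorm g
      _ ≤ ‖ψ‖ * (C * ‖u f‖) := by gcongr
      _ = C * ‖ψ‖ * ‖(⟨u f, f, rfl⟩ : (u : F →ₗ[𝕜] E).range)‖ := by rw [Submodule.coe_norm]; ring
  obtain ⟨φ, hφ, -⟩ := exists_extension_norm_eq _ (φ₀.mkContinuous _ hbound)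
  exact ⟨φ, ContinuousLinearMap.ext fun f ↦ (hφ ⟨u f, f, rfl⟩).trans (hφ₀ f)⟩

end RCLike

/-- If a weak*-continuous linear map between duals of Banach spaces induces an
isometry of the quotient by its kernel into the codomain, then its range is
weak*-closed (the closed-range principle via Krein–Smulian). -/
theorem stmt1 (E F : Type*)
    [NormedAddCommGroup E] [NormedSpace ℂ E] [CompleteSpace E]
    [NormedAddCommGroup F] [NormedSpace ℂ F] [CompleteSpace F]
    (T : StrongDual ℂ E →ₗ[ℂ] StrongDual ℂ F)
    -- T is weak*-to-weak* continuous
    (hwc : Continuous fun φ : WeakDual ℂ E =>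
      StrongDual.toWeakDual (T (WeakDual.toStrongDual φ)))
    -- the induced map from the quotient by the kernel is isometric
    (hiso : ∀ x : StrongDual ℂ E,
      ‖T x‖ = sInf {r : ℝ | ∃ k : StrongDual ℂ E, T k = 0 ∧ r = ‖x - k‖}) :
    IsClosed (Set.range fun x : StrongDual ℂ E => StrongDual.toWeakDual (T x)) := by
  obtain ⟨u, hu⟩ := WeakDual.exists_preadjoint (⟨T, hwc⟩ : WeakDual ℂ E →L[ℂ] WeakDual ℂ F)
  have hTu (φ : StrongDual ℂ E) : T φ = φ ∘L u := ContinuousLinearMap.ext (hu φ)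
  have hdual (φ : StrongDual ℂ E) (f : F) : ‖φ (u f)‖ ≤ ‖φ ∘L u‖ * ‖u f‖ := by
    rcases (norm_nonneg (u f)).eq_or_lt with h0 | hpos
    · simp [norm_eq_zero.1 h0.symm]
    rw [← hTu, hiso φ, ← div_le_iff₀ hpos]
    refine le_csInf ⟨_, 0, map_zero T, rfl⟩ ?_
    rintro _ ⟨k, hk, rfl⟩
    have hkf : k (u f) = 0 := by simpa [hk] using (DFunLike.congr_fun (hTu k) f).symm
    rw [div_le_iff₀ hpos]
    simpa [hkf] using (φ - k).le_opNorm (u f)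
  have hrange : Set.range (fun x => StrongDual.toWeakDual (T x)) =
      {ψ : WeakDual ℂ F | ∀ f, u f = 0 → ψ f = 0} := by
    ext ψ
    refine ⟨?_, fun hψ ↦ ?_⟩
    · rintro ⟨φ, rfl⟩ f hf
      change T φ f = 0
      rw [hTu, ContinuousLinearMap.comp_apply, hf, map_zero]
    · obtain ⟨φ, hφ⟩ := exists_comp_eq_of_forall_exists_preimage_norm_le (ψ := ψ) u
        (exists_preimage_norm_le_of_forall_norm_apply_le u hdual) hψ
      exact ⟨φ, show StrongDual.toWeakDual (T φ) = ψ by rw [hTu, hφ]; rfl⟩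
  simp only [hrange, Set.ofPred_forall]
  exact isClosed_iInter fun f ↦ isClosed_iInter fun _ ↦
    isClosed_eq (WeakDual.eval_continuous f) continuous_const
end

section
/- Let D be a unital C*-algebra, let B be a unital complex Banach algebra with ‖1‖ = 1, and let φ₁, φ₂ : D → B be unital contractive algebra homomorphisms. Suppose S is a subset of D with φ₁(a) = φ₂(a) for all a ∈ S. Then φ₁ and φ₂ agree on the smallest norm-closed star-subalgebra of D containing S. In particular, if the smallest norm-closed star-subalgebra of D containing S is all of D, then φ₁ = φ₂. -/
/-!
For self-adjoint `h` in a C⋆-algebra, `exp (i t h)` is unitary, so the image `b` of `h` under a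
unital contractive homomorphism is hermitian in Vidav's sense: `‖exp (i t b)‖ ≤ 1` for real `t`.
By the Lie product formula `exp (x + y) = lim (exp (x / n) exp (y / n)) ^ n` hermitian elements
are closed under addition, and if `b` and `i b` are both hermitian then `z ↦ exp (z b)` is a
bounded entire function, constant by Liouville, so `b = 0`. Writing `a = h + i k`, agreement
of `φ₁, φ₂` on `a` says that the hermitian element `φ₁ h - φ₂ h` is `-i` times the hermitian
element `φ₁ k - φ₂ k`, so both vanish and the maps agree on `star a = h - i k`. Hence the
equalizer of `φ₁, φ₂` is a star-subalgebra, closed since contractions are continuous.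
-/

open NormedSpace Filter Topology ComplexStarModule

theorem norm_pow_sub_pow_le {R : Type*} [NormedRing R] [NormOneClass R] {a b : R} {K : ℝ}
    (hK : 1 ≤ K) (ha : ‖a‖ ≤ K) (hb : ‖b‖ ≤ K) (n : ℕ) :
    ‖a ^ n - b ^ n‖ ≤ n * K ^ n * ‖a - b‖ := by
  induction n with
  | zero => simp
  | succ n ih =>
    have han : ‖a ^ n‖ ≤ K ^ n := (norm_pow_le a n).trans (by gcongr)
    have hKn : K ^ n ≤ K ^ (n + 1) := pow_le_pow_right₀ hK n.le_succ
    calc ‖a ^ (n + 1) - b ^ (n + 1)‖ = ‖a ^ n * (a - b) + (a ^ n - b ^ n) * b‖ := by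
          congr 1; noncomm_ring
      _ ≤ K ^ n * ‖a - b‖ + n * K ^ n * ‖a - b‖ * K := by
          refine (norm_add_le _ _).trans (add_le_add ((norm_mul_le _ _).trans ?_)
            ((norm_mul_le _ _).trans ?_)) <;> gcongr
      _ = K ^ n * ‖a - b‖ + n * K ^ (n + 1) * ‖a - b‖ := by ring
      _ ≤ (n + 1 : ℕ) * K ^ (n + 1) * ‖a - b‖ := by
          push_cast
          linarith [mul_le_mul_of_nonneg_right hKn (norm_nonneg (a - b))]

section ExpEstimates

variable {𝔸 : Type*} [NormedRing 𝔸] [NormedAlgebra ℚ 𝔸] [CompleteSpace 𝔸] [NormOneClass 𝔸]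

theorem norm_exp_sub_sum_le (x : 𝔸) (k : ℕ) :
    ‖exp x - ∑ m ∈ Finset.range k, (m.factorial⁻¹ : ℚ) • x ^ m‖ ≤ ‖x‖ ^ k * Real.exp ‖x‖ := by
  rw [exp_eq_tsum ℚ]
  dsimp only
  rw [← (expSeries_summable' x).sum_add_tsum_nat_add k, add_sub_cancel_left]
  have hsum : Summable fun n => ‖((n + k).factorial⁻¹ : ℚ) • x ^ (n + k)‖ :=
    (norm_expSeries_summable' x).comp_injective (add_left_injective k)
  refine (norm_tsum_le_tsum_norm hsum).trans ?_
  rw [Real.exp_eq_exp_ℝ, exp_eq_tsum_div, ← tsum_mul_left]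
  refine hsum.tsum_le_tsum (fun n => ?_) ((norm_expSeries_div_summable ‖x‖).of_norm.mul_left _)
  have hfact : ((n + k).factorial : ℝ)⁻¹ ≤ (n.factorial : ℝ)⁻¹ :=
    inv_anti₀ (by positivity) (by exact_mod_cast Nat.factorial_le (Nat.le_add_right n k))
  calc ‖((n + k).factorial⁻¹ : ℚ) • x ^ (n + k)‖
      = ((n + k).factorial : ℝ)⁻¹ * ‖x ^ (n + k)‖ := by simp [norm_smul, ← Rat.norm_cast_real]
    _ ≤ (n.factorial : ℝ)⁻¹ * ‖x‖ ^ (n + k) := by gcongr; exact norm_pow_le x _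
    _ = ‖x‖ ^ k * (‖x‖ ^ n / n.factorial) := by ring

theorem norm_exp_le (x : 𝔸) : ‖exp x‖ ≤ Real.exp ‖x‖ := by
  simpa using norm_exp_sub_sum_le x 0

theorem norm_exp_sub_one_sub_le (x : 𝔸) : ‖exp x - 1 - x‖ ≤ ‖x‖ ^ 2 * Real.exp ‖x‖ := by
  simpa [Finset.sum_range_succ, sub_sub] using norm_exp_sub_sum_le x 2

theorem norm_exp_add_sub_exp_mul_exp_le (x y : 𝔸) :
    ‖exp (x + y) - exp x * exp y‖ ≤ 4 * (‖x‖ + ‖y‖) ^ 2 * Real.exp (‖x‖ + ‖y‖) := by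
  set s := ‖x‖ + ‖y‖
  have hx : ‖x‖ ≤ s := le_add_of_nonneg_right (norm_nonneg y)
  have hy : ‖y‖ ≤ s := le_add_of_nonneg_left (norm_nonneg x)
  have hxy : ‖x + y‖ ≤ s := norm_add_le x y
  have hexp : 1 ≤ Real.exp s := Real.one_le_exp (by positivity)
  have hdecomp : exp (x + y) - exp x * exp y = (exp (x + y) - 1 - (x + y))
      - (exp x - 1 - x) * exp y - (1 + x) * (exp y - 1 - y) - x * y := by noncomm_ring
  have h₁ : ‖exp (x + y) - 1 - (x + y)‖ ≤ s ^ 2 * Real.exp s :=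
    (norm_exp_sub_one_sub_le _).trans (by gcongr)
  have h₂ : ‖(exp x - 1 - x) * exp y‖ ≤ s ^ 2 * Real.exp s :=
    calc ‖(exp x - 1 - x) * exp y‖ ≤ ‖x‖ ^ 2 * Real.exp ‖x‖ * Real.exp ‖y‖ :=
          (norm_mul_le _ _).trans (by gcongr; exacts [norm_exp_sub_one_sub_le x, norm_exp_le y])
      _ ≤ s ^ 2 * Real.exp s := by rw [mul_assoc, ← Real.exp_add]; gcongr
  have h₃ : ‖(1 + x) * (exp y - 1 - y)‖ ≤ s ^ 2 * Real.exp s :=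
    calc ‖(1 + x) * (exp y - 1 - y)‖ ≤ Real.exp ‖x‖ * (‖y‖ ^ 2 * Real.exp ‖y‖) := by
          refine (norm_mul_le _ _).trans (mul_le_mul ?_ (norm_exp_sub_one_sub_le y)
            (norm_nonneg _) (Real.exp_pos _).le)
          calc ‖1 + x‖ ≤ 1 + ‖x‖ := by simpa using norm_add_le (1 : 𝔸) x
            _ ≤ Real.exp ‖x‖ := by linarith [Real.add_one_le_exp ‖x‖]
      _ ≤ s ^ 2 * Real.exp s := by
          rw [mul_left_comm, ← Real.exp_add]; gcongr
  have h₄ : ‖x * y‖ ≤ s ^ 2 * Real.exp s :=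
    calc ‖x * y‖ ≤ ‖x‖ * ‖y‖ := norm_mul_le x y
      _ ≤ s ^ 2 * 1 := by rw [mul_one, sq]; gcongr
      _ ≤ s ^ 2 * Real.exp s := by gcongr
  rw [hdecomp]
  exact (norm_sub_le_of_le (norm_sub_le_of_le (norm_sub_le_of_le h₁ h₂) h₃) h₄).trans_eq (by ring)

theorem tendsto_exp_inv_smul_mul_exp_inv_smul_pow (x y : 𝔸) :
    Tendsto (fun n : ℕ => (exp ((n : ℚ)⁻¹ • x) * exp ((n : ℚ)⁻¹ • y)) ^ n) atTop
      (𝓝 (exp (x + y))) := by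
  set r := ‖x‖ + ‖y‖
  have hbound : ∀ n : ℕ, 1 ≤ n →
      ‖(exp ((n : ℚ)⁻¹ • x) * exp ((n : ℚ)⁻¹ • y)) ^ n - exp (x + y)‖ ≤
        4 * r ^ 2 * Real.exp (2 * r) / n := by
    intro n hn
    have hn' : (1 : ℝ) ≤ n := by exact_mod_cast hn
    set u := (n : ℚ)⁻¹ • x
    set v := (n : ℚ)⁻¹ • y
    have hnorm : ‖u‖ + ‖v‖ = r / n := by
      simp [u, v, r, norm_smul, ← Rat.norm_cast_real]
      ring
    have hpow : exp (x + y) = exp (u + v) ^ n := by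
      rw [← exp_nsmul, ← smul_add, ← Nat.cast_smul_eq_nsmul ℚ, smul_smul,
        mul_inv_cancel₀ (by positivity), one_smul]
    have hA : ‖exp (u + v)‖ ≤ Real.exp (r / n) :=
      (norm_exp_le _).trans (Real.exp_le_exp.2 (hnorm ▸ norm_add_le u v))
    have hP : ‖exp u * exp v‖ ≤ Real.exp (r / n) := by
      rw [← hnorm, Real.exp_add]
      exact (norm_mul_le _ _).trans
        (mul_le_mul (norm_exp_le u) (norm_exp_le v) (norm_nonneg _) (Real.exp_pos _).le)
    have hpow_exp : Real.exp (r / n) ^ n = Real.exp r := by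
      rw [← Real.exp_nat_mul, mul_div_cancel₀ _ (by positivity)]
    rw [hpow, norm_sub_rev]
    calc ‖exp (u + v) ^ n - (exp u * exp v) ^ n‖
        ≤ n * Real.exp (r / n) ^ n * ‖exp (u + v) - exp u * exp v‖ :=
          norm_pow_sub_pow_le (Real.one_le_exp (by positivity)) hA hP n
      _ ≤ n * Real.exp r * (4 * (r / n) ^ 2 * Real.exp r) := by
          rw [hpow_exp]
          gcongr
          refine (norm_exp_add_sub_exp_mul_exp_le u v).trans ?_
          rw [hnorm]
          gcongr
          exact div_le_self (by positivity) hn'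
      _ = 4 * r ^ 2 * Real.exp (2 * r) / n := by
          clear_value r
          rw [two_mul, Real.exp_add]
          field_simp
  rw [tendsto_iff_norm_sub_tendsto_zero]
  refine squeeze_zero' (Eventually.of_forall fun n => norm_nonneg _) ?_
    (tendsto_const_div_atTop_nhds_zero_nat (4 * r ^ 2 * Real.exp (2 * r)))
  filter_upwards [eventually_ge_atTop 1] with n hn using hbound n hn

end ExpEstimates

section Hermitian

variable {B : Type*} [NormedRing B] [NormedAlgebra ℂ B]

def IsHermitian (b : B) : Prop :=
  ∀ t : ℝ, ‖exp ((t * Complex.I) • b)‖ ≤ 1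

theorem IsHermitian.neg {b : B} (hb : IsHermitian b) : IsHermitian (-b) := fun t => by
  simpa [smul_neg, ← neg_smul] using hb (-t)

variable [CompleteSpace B]

theorem IsHermitian.eq_zero_of_isHermitian_I_smul {b : B} (hb : IsHermitian b)
    (hIb : IsHermitian (Complex.I • b)) : b = 0 := by
  let _ : NormedAlgebra ℚ B := .restrictScalars ℚ ℂ B
  have hbounded : ∀ z : ℂ, ‖exp (z • b)‖ ≤ 1 := by
    intro z
    have hz : z • b = ((-z.re : ℝ) * Complex.I) • Complex.I • b + (z.im * Complex.I) • b := by
      rw [smul_smul, ← add_smul]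
      congr 1
      apply Complex.ext <;> simp
    have hcomm : Commute (((-z.re : ℝ) * Complex.I) • Complex.I • b) ((z.im * Complex.I) • b) :=
      (((Commute.refl b).smul_left _).smul_left _).smul_right _
    rw [hz, exp_add_of_commute hcomm]
    exact (norm_mul_le _ _).trans (mul_le_one₀ (hIb _) (norm_nonneg _) (hb _))
  have hdiff : Differentiable ℂ fun z : ℂ => exp (z • b) := fun z =>
    (hasDerivAt_exp_smul_const b z).differentiableAt
  have hconst : (fun z : ℂ => exp (z • b)) = fun _ => 1 := funext fun z =>
    (hdiff.apply_eq_apply_of_bounded (isBounded_iff_forall_norm_le.2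
      ⟨1, by rintro _ ⟨w, rfl⟩; exact hbounded w⟩) z 0).trans (by simp)
  have hderiv := hasDerivAt_exp_smul_const (𝕂 := ℂ) b 0
  rw [hconst] at hderiv
  simpa using hderiv.unique (hasDerivAt_const 0 1)

variable [NormOneClass B]

theorem IsHermitian.add {b c : B} (hb : IsHermitian b) (hc : IsHermitian c) :
    IsHermitian (b + c) := by
  let _ : NormedAlgebra ℚ B := .restrictScalars ℚ ℂ B
  intro t
  have hscale : ∀ {a : B}, IsHermitian a → ∀ n : ℕ,
      ‖exp ((n : ℚ)⁻¹ • (t * Complex.I) • a)‖ ≤ 1 := by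
    intro a ha n
    rw [inv_natCast_smul_eq ℚ ℂ, smul_smul]
    simpa [mul_assoc, div_eq_inv_mul] using ha (t / n)
  rw [smul_add]
  refine le_of_tendsto' (tendsto_exp_inv_smul_mul_exp_inv_smul_pow _ _).norm fun n => ?_
  exact (norm_pow_le _ n).trans (pow_le_one₀ (norm_nonneg _)
    ((norm_mul_le _ _).trans (mul_le_one₀ (hscale hb n) (norm_nonneg _) (hscale hc n))))

theorem IsHermitian.sub {b c : B} (hb : IsHermitian b) (hc : IsHermitian c) :
    IsHermitian (b - c) :=
  sub_eq_add_neg b c ▸ hb.add hc.neg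

end Hermitian

section CStarAlgebra

variable {D : Type*} [NormedRing D] [StarRing D] [CStarRing D] [CompleteSpace D]
  [NormedAlgebra ℂ D] [StarModule ℂ D]
  {B : Type*} [NormedRing B] [NormedAlgebra ℂ B] [NormOneClass B]

theorem IsSelfAdjoint.isHermitian_map {φ : D →ₐ[ℂ] B} (hφ : ∀ d, ‖φ d‖ ≤ ‖d‖) {h : D}
    (hh : IsSelfAdjoint h) : IsHermitian (φ h) := by
  have : Nontrivial B := NormOneClass.nontrivial
  have : Nontrivial D := φ.domain_nontrivial
  let _ : NormedAlgebra ℚ B := .restrictScalars ℚ ℂ B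
  let _ : NormedAlgebra ℚ D := .restrictScalars ℚ ℂ D
  intro t
  have hunitary : NormedSpace.exp ((t * Complex.I) • h) ∈ unitary D :=
    exp_mem_unitary_of_mem_skewAdjoint (hh.smul_mem_skewAdjoint (by simp [skewAdjoint.mem_iff]))
  calc ‖NormedSpace.exp ((t * Complex.I) • φ h)‖
      = ‖φ (NormedSpace.exp ((t * Complex.I) • h))‖ := by
        rw [map_exp φ (AddMonoidHomClass.continuous_of_bound φ 1 (by simpa using hφ)), map_smul]
    _ ≤ 1 := (hφ _).trans (CStarRing.norm_of_mem_unitary hunitary).le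

theorem AlgHom.map_star_eq_of_map_eq [CompleteSpace B] {φ₁ φ₂ : D →ₐ[ℂ] B}
    (hφ₁ : ∀ d, ‖φ₁ d‖ ≤ ‖d‖) (hφ₂ : ∀ d, ‖φ₂ d‖ ≤ ‖d‖) {a : D} (ha : φ₁ a = φ₂ a) :
    φ₁ (star a) = φ₂ (star a) := by
  set b := φ₁ (ℜ a) - φ₂ (ℜ a)
  set c := φ₁ (ℑ a) - φ₂ (ℑ a)
  have hb : IsHermitian b := ((ℜ a).2.isHermitian_map hφ₁).sub ((ℜ a).2.isHermitian_map hφ₂)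
  have hc : IsHermitian c := ((ℑ a).2.isHermitian_map hφ₁).sub ((ℑ a).2.isHermitian_map hφ₂)
  have hdecomp (φ : D →ₐ[ℂ] B) : φ a = φ (ℜ a) + Complex.I • φ (ℑ a) := by
    rw [← map_smul, ← map_add, realPart_add_I_smul_imaginaryPart]
  have hbc : b + Complex.I • c = 0 :=
    calc b + Complex.I • c = φ₁ a - φ₂ a := by
          rw [hdecomp φ₁, hdecomp φ₂]
          simp only [b, c, smul_sub]
          abel
      _ = 0 := sub_eq_zero.2 ha
  have hcb : c = Complex.I • b := by
    rw [eq_neg_of_add_eq_zero_left hbc, smul_neg, smul_smul, Complex.I_mul_I, neg_one_smul,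
      neg_neg]
  have hb0 : b = 0 := hb.eq_zero_of_isHermitian_I_smul (hcb ▸ hc)
  have hc0 : c = 0 := by rw [hcb, hb0, smul_zero]
  have hstar : star a = ℜ a - Complex.I • ℑ a := by
    nth_rewrite 1 [← realPart_add_I_smul_imaginaryPart a]
    simp [sub_eq_add_neg]
  rw [hstar, map_sub, map_sub, map_smul, map_smul, sub_eq_zero.1 hb0, sub_eq_zero.1 hc0]

end CStarAlgebra

/-- Two unital contractive homomorphisms from a unital C*-algebra into a unital
Banach algebra (with ‖1‖ = 1) that agree on a subset `S` agree on the smallest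
norm-closed star-subalgebra containing `S`; in particular if that closed
star-subalgebra is everything, the homomorphisms are equal. -/
theorem stmt3 (D : Type*)
    [NormedRing D] [StarRing D] [CStarRing D] [CompleteSpace D]
    [NormedAlgebra ℂ D] [StarModule ℂ D]
    (B : Type*) [NormedRing B] [NormedAlgebra ℂ B] [CompleteSpace B] [NormOneClass B]
    (φ₁ φ₂ : D →ₐ[ℂ] B)
    (hcontr₁ : ∀ d : D, ‖φ₁ d‖ ≤ ‖d‖) (hcontr₂ : ∀ d : D, ‖φ₂ d‖ ≤ ‖d‖)
    (S : Set D) (hS : ∀ a ∈ S, φ₁ a = φ₂ a) :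
    (∀ x ∈ closure (StarAlgebra.adjoin ℂ S : Set D), φ₁ x = φ₂ x) ∧
    (closure (StarAlgebra.adjoin ℂ S : Set D) = Set.univ → φ₁ = φ₂) := by
  let equalizer : StarSubalgebra ℂ D :=
    { AlgHom.equalizer φ₁ φ₂ with
      star_mem' := AlgHom.map_star_eq_of_map_eq hcontr₁ hcontr₂ }
  have hclosed : IsClosed {x : D | φ₁ x = φ₂ x} :=
    isClosed_eq (AddMonoidHomClass.continuous_of_bound φ₁ 1 (by simpa using hcontr₁))
      (AddMonoidHomClass.continuous_of_bound φ₂ 1 (by simpa using hcontr₂))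
  have hagree : closure (StarAlgebra.adjoin ℂ S : Set D) ⊆ {x | φ₁ x = φ₂ x} :=
    closure_minimal (StarAlgebra.adjoin_le (S := equalizer) hS) hclosed
  exact ⟨hagree, fun hdense => AlgHom.ext fun x => hagree (hdense ▸ Set.mem_univ x)⟩
end

section
/- Let D be a W*-algebra and let M be a subalgebra of D containing the unit of D such that the star-subalgebra of D generated by M is weak*-dense in D. Let H₁ and H₂ be complex Hilbert spaces and for i = 1, 2 let πᵢ : D → B(Hᵢ) be a unital contractive algebra homomorphism into the bounded operators on Hᵢ that is continuous from the weak* topology of D to the weak operator topology of B(Hᵢ). If U : H₁ → H₂ is a unitary operator satisfying U∘π₁(a) = π₂(a)∘U for all a ∈ M, then U∘π₁(d) = π₂(d)∘U for all d ∈ D. -/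
open NormedSpace
open scoped InnerProductSpace

/-!
A unital contractive homomorphism `π` of a C⋆-algebra into `B(H)` sends a unitary `u` to an
invertible contraction `π u` whose inverse `π (star u)` is again a contraction, hence to a
unitary; as unitaries span a C⋆-algebra, `π` is a ⋆-homomorphism. The elements intertwined by
`U` then form the equalizer of the ⋆-homomorphisms `π₂` and `U π₁ U⁻¹`, a star subalgebra, so
they include the ⋆-algebra generated by `M`. Finally `⟪U (π₁ d ξ), η⟫ = ⟪π₂ d (U ξ), η⟫` is an
equality of weak*-continuous functions of `d` holding on a weak*-dense set.
-/

theorem CStarRing.norm_le_one_of_mem_unitary {A : Type*} [NormedRing A] [StarRing A]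
    [CStarRing A] {u : A} (hu : u ∈ unitary A) : ‖u‖ ≤ 1 := by
  rcases subsingleton_or_nontrivial A with hA | hA
  · simp [Subsingleton.elim u 0]
  · exact (CStarRing.norm_of_mem_unitary hu).le

section Unitary

variable {𝕜 : Type*} [RCLike 𝕜]
variable {H : Type*} [NormedAddCommGroup H] [InnerProductSpace 𝕜 H] [CompleteSpace H]

theorem ContinuousLinearMap.mem_unitary_of_norm_le_one {T S : H →L[𝕜] H}
    (hST : S * T = 1) (hTS : T * S = 1) (hT : ‖T‖ ≤ 1) (hS : ‖S‖ ≤ 1) :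
    T ∈ unitary (H →L[𝕜] H) := by
  have hnorm : ∀ x, ‖T x‖ = ‖x‖ := fun x => le_antisymm
    ((T.le_of_opNorm_le hT x).trans_eq (one_mul _))
    (calc ‖x‖ = ‖S (T x)‖ := by rw [← mul_apply_eq_comp, hST, one_apply_eq_self]
      _ ≤ ‖T x‖ := (S.le_of_opNorm_le hS (T x)).trans_eq (one_mul _))
  exact IsUnit.mem_unitary_of_star_mul_self ⟨⟨T, S, hTS, hST⟩, rfl⟩
    (T.norm_map_iff_adjoint_comp_self.mp hnorm)

variable {A : Type*} [NormedRing A] [StarRing A] [CStarRing A] [NormedAlgebra 𝕜 A]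

theorem AlgHom.map_mem_unitary_of_norm_map_le (π : A →ₐ[𝕜] (H →L[𝕜] H))
    (hπ : ∀ a, ‖π a‖ ≤ ‖a‖) {u : A} (hu : u ∈ unitary A) : π u ∈ unitary (H →L[𝕜] H) :=
  ContinuousLinearMap.mem_unitary_of_norm_le_one (S := π (star u))
    (by rw [← map_mul, Unitary.star_mul_self_of_mem hu, map_one])
    (by rw [← map_mul, Unitary.mul_star_self_of_mem hu, map_one])
    ((hπ u).trans (CStarRing.norm_le_one_of_mem_unitary hu))
    ((hπ _).trans (CStarRing.norm_le_one_of_mem_unitary (Unitary.star_mem hu)))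

end Unitary

section Contractive

variable {A : Type*} [NormedRing A] [StarRing A] [CStarRing A] [CompleteSpace A]
  [NormedAlgebra ℂ A] [StarModule ℂ A]
variable {H : Type*} [NormedAddCommGroup H] [InnerProductSpace ℂ H] [CompleteSpace H]

theorem AlgHom.map_star_of_norm_map_le (π : A →ₐ[ℂ] (H →L[ℂ] H)) (hπ : ∀ a, ‖π a‖ ≤ ‖a‖)
    (a : A) : π (star a) = star (π a) := by
  let _ : CStarAlgebra A := {}
  have hunitary : ∀ u ∈ unitary A, π (star u) = star (π u) := fun u hu =>
    calc π (star u) = π (star u) * (π u * star (π u)) := by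
          rw [Unitary.mul_star_self_of_mem (π.map_mem_unitary_of_norm_map_le hπ hu), mul_one]
      _ = star (π u) := by
          rw [← mul_assoc, ← map_mul, Unitary.star_mul_self_of_mem hu, map_one, one_mul]
  have ha : a ∈ Submodule.span ℂ (unitary A : Set A) := by
    rw [CStarAlgebra.span_unitary]; trivial
  induction ha using Submodule.span_induction with
  | mem u hu => exact hunitary u hu
  | zero => simp
  | add x y _ _ hx hy => simp only [star_add, map_add, hx, hy]
  | smul c x _ hx => simp only [star_smul, map_smul, hx]

def AlgHom.toStarAlgHomOfNormMapLE (π : A →ₐ[ℂ] (H →L[ℂ] H)) (hπ : ∀ a, ‖π a‖ ≤ ‖a‖) :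
    A →⋆ₐ[ℂ] (H →L[ℂ] H) :=
  { π with map_star' := π.map_star_of_norm_map_le hπ }

end Contractive

theorem StarAlgHom.intertwines_of_mem_adjoin {𝕜 : Type*} [RCLike 𝕜]
    {A : Type*} [Ring A] [StarRing A] [Algebra 𝕜 A] [StarModule 𝕜 A]
    {H₁ : Type*} [NormedAddCommGroup H₁] [InnerProductSpace 𝕜 H₁] [CompleteSpace H₁]
    {H₂ : Type*} [NormedAddCommGroup H₂] [InnerProductSpace 𝕜 H₂] [CompleteSpace H₂]
    (π₁ : A →⋆ₐ[𝕜] (H₁ →L[𝕜] H₁)) (π₂ : A →⋆ₐ[𝕜] (H₂ →L[𝕜] H₂)) (U : H₁ ≃ₗᵢ[𝕜] H₂)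
    {s : Set A} (hs : ∀ a ∈ s, ∀ ξ, U (π₁ a ξ) = π₂ a (U ξ))
    {a : A} (ha : a ∈ StarAlgebra.adjoin 𝕜 s) (ξ : H₁) : U (π₁ a ξ) = π₂ a (U ξ) := by
  have hle : StarAlgebra.adjoin 𝕜 s ≤
      StarAlgHom.equalizer (U.conjStarAlgEquiv.toStarAlgHom.comp π₁) π₂ :=
    StarAlgHom.adjoin_le_equalizer _ _ fun b hb => ContinuousLinearMap.ext fun y => by
      simpa using hs b hb (U.symm y)
  simpa using congrArg (fun T : H₂ →L[𝕜] H₂ => T (U ξ)) (hle ha)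

theorem eq_of_eqOn_of_dense_weakDual {𝕜 : Type*} [NontriviallyNormedField 𝕜]
    {D : Type*} [SeminormedAddCommGroup D] [NormedSpace 𝕜 D]
    {Dp : Type*} [NormedAddCommGroup Dp] [NormedSpace 𝕜 Dp] (ιD : D ≃ₗᵢ[𝕜] StrongDual 𝕜 Dp)
    {X : Type*} [TopologicalSpace X] [T2Space X] {S : Set D}
    (hS : Dense ((fun d : D => StrongDual.toWeakDual (ιD d)) '' S)) {f g : D → X}
    (hf : Continuous fun φ : WeakDual 𝕜 Dp => f (ιD.symm (WeakDual.toStrongDual φ)))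
    (hg : Continuous fun φ : WeakDual 𝕜 Dp => g (ιD.symm (WeakDual.toStrongDual φ)))
    (hfg : Set.EqOn f g S) (d : D) : f d = g d := by
  have h := hf.ext_on hS hg (by rintro _ ⟨s, hs, rfl⟩; simpa using hfg hs)
  simpa using congrFun h (StrongDual.toWeakDual (ιD d))

/-- A unitary intertwiner of two unital contractive weak*-to-WOT continuous
representations of a W*-algebra `D` which intertwines the representations on a
weak*-generating unital subalgebra `M` intertwines them on all of `D`. -/
theorem stmt7
    -- D : a W*-algebra with predual Dp
    (D : Type*) [NormedRing D] [StarRing D] [CStarRing D] [CompleteSpace D]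
    [NormedAlgebra ℂ D] [StarModule ℂ D]
    (Dp : Type*) [NormedAddCommGroup Dp] [NormedSpace ℂ Dp]
    (ιD : D ≃ₗᵢ[ℂ] StrongDual ℂ Dp)
    -- M : a unital subalgebra generating D as a W*-algebra
    (M : Subalgebra ℂ D)
    (hgen : Dense ((fun d : D => StrongDual.toWeakDual (ιD d)) ''
      (StarAlgebra.adjoin ℂ (M : Set D) : Set D)))
    -- H₁, H₂ : complex Hilbert spaces
    (H₁ : Type*) [NormedAddCommGroup H₁] [InnerProductSpace ℂ H₁] [CompleteSpace H₁]
    (H₂ : Type*) [NormedAddCommGroup H₂] [InnerProductSpace ℂ H₂] [CompleteSpace H₂]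
    -- π₁, π₂ : unital contractive homomorphisms, continuous from weak* to WOT
    (π₁ : D →ₐ[ℂ] (H₁ →L[ℂ] H₁)) (π₂ : D →ₐ[ℂ] (H₂ →L[ℂ] H₂))
    (hcontr₁ : ∀ d : D, ‖π₁ d‖ ≤ ‖d‖) (hcontr₂ : ∀ d : D, ‖π₂ d‖ ≤ ‖d‖)
    (hwot₁ : ∀ (ξ η : H₁), Continuous fun φ : WeakDual ℂ Dp =>
      ⟪(π₁ (ιD.symm (WeakDual.toStrongDual φ))) ξ, η⟫_ℂ)
    (hwot₂ : ∀ (ξ η : H₂), Continuous fun φ : WeakDual ℂ Dp =>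
      ⟪(π₂ (ιD.symm (WeakDual.toStrongDual φ))) ξ, η⟫_ℂ)
    -- U : a unitary intertwining π₁ and π₂ on M
    (U : H₁ ≃ₗᵢ[ℂ] H₂)
    (hU : ∀ a ∈ M, ∀ ξ : H₁, U (π₁ a ξ) = π₂ a (U ξ)) :
    ∀ (d : D) (ξ : H₁), U (π₁ d ξ) = π₂ d (U ξ) := by
  intro d ξ
  have hadjoin : ∀ a ∈ StarAlgebra.adjoin ℂ (M : Set D), U (π₁ a ξ) = π₂ a (U ξ) :=
    fun a ha => StarAlgHom.intertwines_of_mem_adjoin (π₁.toStarAlgHomOfNormMapLE hcontr₁)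
      (π₂.toStarAlgHomOfNormMapLE hcontr₂) U hU ha ξ
  refine ext_inner_right ℂ fun η => ?_
  rw [U.inner_map_eq_flip]
  exact eq_of_eqOn_of_dense_weakDual ιD hgen (f := fun a => ⟪π₁ a ξ, U.symm η⟫_ℂ)
    (g := fun a => ⟪π₂ a (U ξ), η⟫_ℂ) (hwot₁ ξ (U.symm η)) (hwot₂ (U ξ) η)
    (fun a ha => by simp only [← U.inner_map_eq_flip, hadjoin a ha]) d
end
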